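/- arXiv:0805.2361 — 2 statements merged into one kernel-verified Lean document; each statement's English description precedes it below -/
import Mathlib

section
/- Let k ∈ ℕ, let ζ₁,…,ζ_k ∈ ℝ and v₁,…,v_k ∈ ℝ². Define ℝ²-valued functions on ℝ² by P(x, y) = (1/(4π))·∑_{j=1}^k y·((x − ζ_j)² + y²)^{−1/2}·v_j and Q(x, y) = (1/(4π))·∑_{j=1}^k (x − ζ_j)·((x − ζ_j)² + y²)^{−1/2}·v_j. Then at every point (x, y) with y > 0, Joyce's equations hold: ∂P/∂x = ∂Q/∂y and ∂P/∂y + ∂Q/∂x = y⁻¹·P (equality of ℝ²-valued derivatives). -/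
private lemma aux1 (c a b t : ℝ) (h : 0 < (t - a) ^ 2 + b ^ 2) :
    HasDerivAt (fun s : ℝ => ((s - a) ^ 2 + b ^ 2) ^ c)
      (c * ((t - a) ^ 2 + b ^ 2) ^ (c - 1) * (2 * (t - a))) t := by
  have h1 : HasDerivAt (fun s : ℝ => (s - a) ^ 2 + b ^ 2) (2 * (t - a)) t := by
    simpa [mul_comm] using (((hasDerivAt_id t).sub_const a).pow 2).add_const (b ^ 2)
  simpa [mul_assoc, Function.comp_def] using
    (Real.hasDerivAt_rpow_const (p := c) (Or.inl h.ne')).comp t h1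

private lemma aux2 (c b t : ℝ) (h : 0 < b ^ 2 + t ^ 2) :
    HasDerivAt (fun s : ℝ => (b ^ 2 + s ^ 2) ^ c)
      (c * (b ^ 2 + t ^ 2) ^ (c - 1) * (2 * t)) t := by
  have h1 : HasDerivAt (fun s : ℝ => b ^ 2 + s ^ 2) (2 * t) t := by
    simpa [mul_comm] using ((hasDerivAt_id t).pow 2).const_add (b ^ 2)
  simpa [mul_assoc, Function.comp_def] using
    (Real.hasDerivAt_rpow_const (p := c) (Or.inl h.ne')).comp t h1


open Finset in
/-- The `ℝ²`-valued pair
`P(x,y) = (1/4π)·∑ⱼ y·((x−ζⱼ)²+y²)^{−1/2}·vⱼ`,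
`Q(x,y) = (1/4π)·∑ⱼ (x−ζⱼ)·((x−ζⱼ)²+y²)^{−1/2}·vⱼ`
satisfies Joyce's equations `P_x = Q_y` and `P_y + Q_x = y⁻¹·P` on the
half-plane `y > 0`. -/
theorem stmt_10 (k : ℕ) (ζ : Fin k → ℝ) (v : Fin k → ℝ × ℝ) (x y : ℝ)
    (hy : 0 < y) :
    (deriv (fun x' : ℝ => (1 / (4 * Real.pi)) •
        ∑ j, (y * ((x' - ζ j) ^ 2 + y ^ 2) ^ (-(1 / 2) : ℝ)) • v j) x =
      deriv (fun y' : ℝ => (1 / (4 * Real.pi)) •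
        ∑ j, ((x - ζ j) * ((x - ζ j) ^ 2 + y' ^ 2) ^ (-(1 / 2) : ℝ)) • v j) y) ∧
    (deriv (fun y' : ℝ => (1 / (4 * Real.pi)) •
        ∑ j, (y' * ((x - ζ j) ^ 2 + y' ^ 2) ^ (-(1 / 2) : ℝ)) • v j) y +
      deriv (fun x' : ℝ => (1 / (4 * Real.pi)) •
        ∑ j, ((x' - ζ j) * ((x' - ζ j) ^ 2 + y ^ 2) ^ (-(1 / 2) : ℝ)) • v j) x =
      y⁻¹ • ((1 / (4 * Real.pi)) •
        ∑ j, (y * ((x - ζ j) ^ 2 + y ^ 2) ^ (-(1 / 2) : ℝ)) • v j)) := by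
  set c : ℝ := -(1 / 2) with hc
  have hg : ∀ j : Fin k, 0 < (x - ζ j) ^ 2 + y ^ 2 := fun j => by positivity
  -- notation
  set g : Fin k → ℝ := fun j => (x - ζ j) ^ 2 + y ^ 2 with hgdef
  -- P_x
  have hPx : HasDerivAt (fun x' : ℝ => (1 / (4 * Real.pi)) •
      ∑ j, (y * ((x' - ζ j) ^ 2 + y ^ 2) ^ c) • v j)
      ((1 / (4 * Real.pi)) •
        ∑ j, (y * (c * (g j) ^ (c - 1) * (2 * (x - ζ j)))) • v j) x := by
    refine HasDerivAt.fun_const_smul _ (HasDerivAt.fun_sum fun j _ => ?_)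
    exact ((aux1 c (ζ j) y x (hg j)).const_mul y).smul_const (v j)
  -- Q_y
  have hQy : HasDerivAt (fun y' : ℝ => (1 / (4 * Real.pi)) •
      ∑ j, ((x - ζ j) * ((x - ζ j) ^ 2 + y' ^ 2) ^ c) • v j)
      ((1 / (4 * Real.pi)) •
        ∑ j, ((x - ζ j) * (c * (g j) ^ (c - 1) * (2 * y))) • v j) y := by
    refine HasDerivAt.fun_const_smul _ (HasDerivAt.fun_sum fun j _ => ?_)
    exact ((aux2 c (x - ζ j) y (hg j)).const_mul (x - ζ j)).smul_const (v j)
  -- P_y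
  have hPy : HasDerivAt (fun y' : ℝ => (1 / (4 * Real.pi)) •
      ∑ j, (y' * ((x - ζ j) ^ 2 + y' ^ 2) ^ c) • v j)
      ((1 / (4 * Real.pi)) •
        ∑ j, (1 * (g j) ^ c + y * (c * (g j) ^ (c - 1) * (2 * y))) • v j) y := by
    refine HasDerivAt.fun_const_smul _ (HasDerivAt.fun_sum fun j _ => ?_)
    exact ((hasDerivAt_id y).mul (aux2 c (x - ζ j) y (hg j))).smul_const (v j)
  -- Q_x
  have hQx : HasDerivAt (fun x' : ℝ => (1 / (4 * Real.pi)) •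
      ∑ j, ((x' - ζ j) * ((x' - ζ j) ^ 2 + y ^ 2) ^ c) • v j)
      ((1 / (4 * Real.pi)) •
        ∑ j, (1 * (g j) ^ c + (x - ζ j) * (c * (g j) ^ (c - 1) * (2 * (x - ζ j)))) • v j) x := by
    refine HasDerivAt.fun_const_smul _ (HasDerivAt.fun_sum fun j _ => ?_)
    exact (((hasDerivAt_id x).sub_const (ζ j)).mul (aux1 c (ζ j) y x (hg j))).smul_const (v j)
  rw [hPx.deriv, hQy.deriv, hPy.deriv, hQx.deriv]
  have hsub : ∀ j : Fin k, (g j) ^ (c - 1) = (g j) ^ c / (g j) := fun j =>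
    Real.rpow_sub_one (hg j).ne' c
  constructor
  · refine congrArg _ (congrArg _ (funext fun j => ?_))
    congr 1
    ring
  · rw [smul_comm y⁻¹, ← smul_add]
    refine congrArg _ ?_
    rw [← Finset.sum_add_distrib, Finset.smul_sum]
    refine Finset.sum_congr rfl fun j _ => ?_
    rw [smul_smul, ← add_smul]
    congr 1
    rw [hsub j, hc]
    have hgne : g j ≠ 0 := (hg j).ne'
    field_simp
    ring
end

section
/- Let A₁, A₂, B₁, B₂, c₁, c₂, c₁′, c₂′, a′, b′ ∈ ℂ with c₁ ≠ 0, c₂ ≠ 0 and A₁B₂ − A₂B₁ ≠ 0. Suppose there exists a nonzero w ∈ ℂ such that 2π·c₁·(A₁·a′·w⁻¹ + B₁·b′·w) + c₁′ = 0 and 2π·c₂·(A₂·a′·w⁻¹ + B₂·b′·w) + c₂′ = 0. Then (2π)²·(A₁B₂ − A₂B₁)²·a′·b′ = (A₂·c₁⁻¹·c₁′ − A₁·c₂⁻¹·c₂′)·(B₁·c₂⁻¹·c₂′ − B₂·c₁⁻¹·c₁′). -/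
/-- Eliminating `w` from the two null-cone equations
`2πc_j(A_j a′ w⁻¹ + B_j b′ w) + c_j′ = 0` (`j = 1,2`) yields the quadratic
relation defining the conformal structure. -/
theorem stmt_12 (A₁ A₂ B₁ B₂ c₁ c₂ c₁' c₂' a' b' : ℂ)
    (hc₁ : c₁ ≠ 0) (hc₂ : c₂ ≠ 0) (hAB : A₁ * B₂ - A₂ * B₁ ≠ 0)
    (hw : ∃ w : ℂ, w ≠ 0 ∧
      2 * (Real.pi : ℂ) * c₁ * (A₁ * a' * w⁻¹ + B₁ * b' * w) + c₁' = 0 ∧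
      2 * (Real.pi : ℂ) * c₂ * (A₂ * a' * w⁻¹ + B₂ * b' * w) + c₂' = 0) :
    (2 * (Real.pi : ℂ)) ^ 2 * (A₁ * B₂ - A₂ * B₁) ^ 2 * a' * b' =
      (A₂ * c₁⁻¹ * c₁' - A₁ * c₂⁻¹ * c₂') *
        (B₁ * c₂⁻¹ * c₂' - B₂ * c₁⁻¹ * c₁') := by
  obtain ⟨w, hw0, h1, h2⟩ := hw
  field_simp at h1 h2 ⊢
  have hA : (A₂ * c₁' * c₂ - c₁ * (A₁ * c₂')) * w =
      2 * (Real.pi : ℂ) * c₁ * c₂ * b' * w * w * (A₁ * B₂ - A₂ * B₁) := by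
    linear_combination A₂ * c₂ * h1 - A₁ * c₁ * h2
  have hB : (B₁ * c₂' * c₁ - c₂ * (B₂ * c₁')) * w =
      2 * (Real.pi : ℂ) * c₁ * c₂ * a' * (A₁ * B₂ - A₂ * B₁) := by
    linear_combination B₁ * c₁ * h2 - B₂ * c₂ * h1
  have h3 : (2 * (Real.pi : ℂ)) ^ 2 * (A₁ * B₂ - A₂ * B₁) ^ 2 * a' * b' *
      (c₁ * c₂ * (c₂ * c₁)) * w ^ 2 =
      (A₂ * c₁' * c₂ - c₁ * (A₁ * c₂')) * (B₁ * c₂' * c₁ - c₂ * (B₂ * c₁')) * w ^ 2 := by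
    linear_combination (-(B₁ * c₂' * c₁ - c₂ * (B₂ * c₁')) * w) * hA -
      (2 * (Real.pi : ℂ) * c₁ * c₂ * b' * w * w * (A₁ * B₂ - A₂ * B₁)) * hB
  exact mul_right_cancel₀ (pow_ne_zero 2 hw0) (by linear_combination h3)
end
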